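/- Let 0 < μ ≤ M. There exist positive constants C₀ and C₁, depending only on μ and M, such that for every symmetric 2×2 real matrix a satisfying μ|ξ|² ≤ ξ·aξ ≤ M|ξ|² for all ξ ∈ ℝ², and for every symmetric 2×2 real matrix e, one has C₀ (Σ_{i,j=1}^{2} a_{ij} e_{ij})² ≥ Σ_{i,j=1}^{2} e_{ij}² + C₁ det(e). -/
import Mathlib


open MeasureTheory

noncomputable section

abbrev Ed (d : ℕ) := EuclideanSpace ℝ (Fin d)

/-- The `i`-th coordinate unit vector of `ℝ^d`. -/
def unitVec (d : ℕ) (i : Fin d) : Ed d := EuclideanSpace.single i 1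

/-- Test functions: smooth and compactly supported. -/
def IsTest (d : ℕ) (φ : Ed d → ℝ) : Prop :=
  ContDiff ℝ (⊤ : ℕ∞) φ ∧ HasCompactSupport φ

/-- The `i`-th partial derivative. -/
def pd (d : ℕ) (i : Fin d) (φ : Ed d → ℝ) (x : Ed d) : ℝ :=
  fderiv ℝ φ x (unitVec d i)

/-- The second partial derivative `∂ᵢ∂ⱼ`. -/
def pd2 (d : ℕ) (i j : Fin d) (φ : Ed d → ℝ) (x : Ed d) : ℝ :=
  pd d i (pd d j φ) x

/-- `g` is the weak gradient of `u` on `ℝ^d`: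
`∫ u ∂ᵢφ = -∫ gᵢ φ` for every test function `φ`. -/
def HasWeakGrad (d : ℕ) (u : Ed d → ℝ) (g : Ed d → Ed d) : Prop :=
  ∀ (i : Fin d) (φ : Ed d → ℝ), IsTest d φ →
    ∫ x, u x * pd d i φ x = - ∫ x, g x i * φ x

/-- `H` is the weak Hessian of `u` on `ℝ^d`:
`∫ u ∂ᵢ∂ⱼφ = ∫ Hᵢⱼ φ` for every test function `φ`. -/
def HasWeakHess (d : ℕ) (u : Ed d → ℝ) (H : Ed d → Fin d → Fin d → ℝ) : Prop :=
  ∀ (i j : Fin d) (φ : Ed d → ℝ), IsTest d φ →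
    ∫ x, u x * pd2 d i j φ x = ∫ x, H x i j * φ x

set_option maxHeartbeats 1000000

lemma scal_pos (μ M α β x y : ℝ) (hμ : 0 < μ) (hμM : μ ≤ M)
    (h1 : μ ≤ α) (h2 : α ≤ M) (h3 : μ ≤ β) (h4 : β ≤ M)
    (hx : 0 ≤ x) (hy : 0 ≤ y) :
    μ^3*M*(x^2+y^2) + 2*(M^2+μ^2)*μ^2*(x*y)
      ≤ (4*μ*M + 2*(M^2+μ^2))*(α*x + β*y)^2 := by
  have hM : 0 < M := lt_of_lt_of_le hμ hμM
  have hS : μ*(x+y) ≤ α*x+β*y := by nlinarith [mul_nonneg (sub_nonneg.2 h1) hx, mul_nonneg (sub_nonneg.2 h3) hy]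
  have hS0 : 0 ≤ μ*(x+y) := by positivity
  have hS2 : (μ*(x+y))^2 ≤ (α*x+β*y)^2 := by nlinarith
  have h5 := mul_le_mul_of_nonneg_left hS2 (by positivity : (0:ℝ) ≤ 4*μ*M + 2*(M^2+μ^2))
  have hxy := mul_nonneg hx hy
  nlinarith [mul_nonneg (mul_nonneg (mul_nonneg hμ.le hμ.le) (mul_nonneg hμ.le hM.le)) hxy,
    mul_nonneg (mul_nonneg (mul_nonneg hμ.le hμ.le) (mul_nonneg hM.le hM.le)) hxy,
    mul_nonneg (mul_nonneg (mul_nonneg hμ.le hμ.le) (mul_nonneg hμ.le hμ.le)) hxy,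
    mul_nonneg (mul_nonneg (mul_nonneg hμ.le hμ.le) (mul_nonneg hμ.le hM.le)) (sq_nonneg x),
    mul_nonneg (mul_nonneg (mul_nonneg hμ.le hμ.le) (mul_nonneg hM.le hM.le)) (sq_nonneg x),
    mul_nonneg (mul_nonneg (mul_nonneg hμ.le hμ.le) (mul_nonneg hμ.le hμ.le)) (sq_nonneg x),
    mul_nonneg (mul_nonneg (mul_nonneg hμ.le hμ.le) (mul_nonneg hμ.le hM.le)) (sq_nonneg y),
    mul_nonneg (mul_nonneg (mul_nonneg hμ.le hμ.le) (mul_nonneg hM.le hM.le)) (sq_nonneg y),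
    mul_nonneg (mul_nonneg (mul_nonneg hμ.le hμ.le) (mul_nonneg hμ.le hμ.le)) (sq_nonneg y)]

lemma scal_mix' (μ M α β x m : ℝ) (hμ : 0 < μ) (hμM : μ ≤ M)
    (h1 : μ ≤ α) (h2 : α ≤ M) (h3 : μ ≤ β) (h4 : β ≤ M)
    (hx : 0 ≤ x) (hm0 : 0 ≤ m) :
    μ^3*M*(x^2+m^2) - 2*(M^2+μ^2)*μ^2*(x*m)
      ≤ (4*μ*M + 2*(M^2+μ^2))*(α*x - β*m)^2 := by
  have hM : 0 < M := lt_of_lt_of_le hμ hμM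
  have hxm := mul_nonneg hx hm0
  rcases le_or_gt (2*M*m) (μ*x) with hc1 | hc1
  · have hS : μ*x - M*m ≤ α*x - β*m := by
      nlinarith [mul_nonneg (sub_nonneg.2 h1) hx, mul_nonneg (sub_nonneg.2 h4) hm0]
    have hS0 : 0 ≤ μ*x - M*m := by nlinarith
    have hS2 : (μ*x - M*m)^2 ≤ (α*x - β*m)^2 := by nlinarith
    have h5 := mul_le_mul_of_nonneg_left hS2 (by positivity : (0:ℝ) ≤ 4*μ*M + 2*(M^2+μ^2))
    have hg : (0:ℝ) ≤ μ*x - 2*M*m := by linarith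
    nlinarith [mul_nonneg (mul_nonneg (mul_nonneg hμ.le hM.le) hM.le) (mul_nonneg hx hg),
      mul_nonneg (mul_nonneg (mul_nonneg hμ.le hμ.le) hM.le) (mul_nonneg hx hg),
      mul_nonneg (mul_nonneg (mul_nonneg hμ.le hμ.le) hμ.le) (mul_nonneg hx hg),
      mul_nonneg (mul_nonneg (mul_nonneg hμ.le hμ.le) hM.le) (mul_nonneg (sq_nonneg m) (by linarith : (0:ℝ) ≤ M - μ)),
      mul_nonneg (mul_nonneg (mul_nonneg hM.le hM.le) (mul_nonneg hM.le hM.le)) (sq_nonneg m),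
      mul_nonneg (mul_nonneg (mul_nonneg hμ.le hM.le) (mul_nonneg hM.le hM.le)) (sq_nonneg m),
      mul_nonneg (mul_nonneg (mul_nonneg hμ.le hμ.le) (mul_nonneg hM.le hM.le)) (sq_nonneg m),
      mul_nonneg (mul_nonneg (mul_nonneg hμ.le hμ.le) (mul_nonneg hμ.le hμ.le)) hxm]
  · rcases le_or_gt (2*M*x) (μ*m) with hc2 | hc2
    · have hS : α*x - β*m ≤ -(μ*m - M*x) := by
        nlinarith [mul_nonneg (sub_nonneg.2 h2) hx, mul_nonneg (sub_nonneg.2 h3) hm0]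
      have hS0 : 0 ≤ μ*m - M*x := by nlinarith
      have hS2 : (μ*m - M*x)^2 ≤ (α*x - β*m)^2 := by nlinarith
      have h5 := mul_le_mul_of_nonneg_left hS2 (by positivity : (0:ℝ) ≤ 4*μ*M + 2*(M^2+μ^2))
      have hg : (0:ℝ) ≤ μ*m - 2*M*x := by linarith
      nlinarith [mul_nonneg (mul_nonneg (mul_nonneg hμ.le hM.le) hM.le) (mul_nonneg hm0 hg),
        mul_nonneg (mul_nonneg (mul_nonneg hμ.le hμ.le) hM.le) (mul_nonneg hm0 hg),
        mul_nonneg (mul_nonneg (mul_nonneg hμ.le hμ.le) hμ.le) (mul_nonneg hm0 hg),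
        mul_nonneg (mul_nonneg (mul_nonneg hμ.le hμ.le) hM.le) (mul_nonneg (sq_nonneg x) (by linarith : (0:ℝ) ≤ M - μ)),
        mul_nonneg (mul_nonneg (mul_nonneg hM.le hM.le) (mul_nonneg hM.le hM.le)) (sq_nonneg x),
        mul_nonneg (mul_nonneg (mul_nonneg hμ.le hM.le) (mul_nonneg hM.le hM.le)) (sq_nonneg x),
        mul_nonneg (mul_nonneg (mul_nonneg hμ.le hμ.le) (mul_nonneg hM.le hM.le)) (sq_nonneg x),
        mul_nonneg (mul_nonneg (mul_nonneg hμ.le hμ.le) (mul_nonneg hμ.le hμ.le)) hxm]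
    · have key : μ*M*(x^2+m^2) ≤ 2*(M^2+μ^2)*(x*m) := by
        nlinarith [mul_nonneg (by linarith : (0:ℝ) ≤ 2*M*m - μ*x) (by linarith : (0:ℝ) ≤ 2*M*x - μ*m), hxm]
      have key2 := mul_le_mul_of_nonneg_left key (by positivity : (0:ℝ) ≤ μ^2)
      have hR : 0 ≤ (4*μ*M + 2*(M^2+μ^2))*(α*x - β*m)^2 := by positivity
      nlinarith [key2, hR]

lemma scal_all (μ M α β x y : ℝ) (hμ : 0 < μ) (hμM : μ ≤ M)
    (h1 : μ ≤ α) (h2 : α ≤ M) (h3 : β ≥ μ) (h4 : β ≤ M) :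
    μ^3*M*(x^2+y^2) + 2*(M^2+μ^2)*μ^2*(x*y)
      ≤ (4*μ*M + 2*(M^2+μ^2))*(α*x + β*y)^2 := by
  rcases le_or_gt 0 x with hx | hx <;> rcases le_or_gt 0 y with hy | hy
  · exact scal_pos μ M α β x y hμ hμM h1 h2 h3 h4 hx hy
  · have h := scal_mix' μ M α β x (-y) hμ hμM h1 h2 h3 h4 hx (by linarith)
    nlinarith [h]
  · have h := scal_mix' μ M β α y (-x) hμ hμM h3 h4 h1 h2 hy (by linarith)
    nlinarith [h]
  · have h := scal_pos μ M α β (-x) (-y) hμ hμM h1 h2 h3 h4 (by linarith) (by linarith)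
    nlinarith [h]

lemma glue (μ M α β x y : ℝ) (hμ : 0 < μ) (hμM : μ ≤ M)
    (h1 : μ ≤ α) (h2 : α ≤ M) (h3 : μ ≤ β) (h4 : β ≤ M) :
    x^2 + y^2 + (2*(M^2+μ^2)/(μ*M))*(x*y)
      ≤ ((4*μ*M + 2*(M^2+μ^2))/(μ^3*M))*(α*x+β*y)^2 := by
  have hM : 0 < M := lt_of_lt_of_le hμ hμM
  have hd : (0:ℝ) < μ^3*M := by positivity
  have h := scal_all μ M α β x y hμ hμM h1 h2 h3 h4
  have e1 : x^2 + y^2 + (2*(M^2+μ^2)/(μ*M))*(x*y)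
      = (μ^3*M*(x^2+y^2) + 2*(M^2+μ^2)*μ^2*(x*y))/(μ^3*M) := by
    field_simp
  have e2 : ((4*μ*M + 2*(M^2+μ^2))/(μ^3*M))*(α*x+β*y)^2
      = ((4*μ*M + 2*(M^2+μ^2))*(α*x+β*y)^2)/(μ^3*M) := by ring
  rw [e1, e2]
  exact (div_le_div_iff_of_pos_right hd).mpr h

lemma main2 (μ M a0 a1 g e0 e1 p : ℝ) (hμ : 0 < μ) (hμM : μ ≤ M)
    (hQ : ∀ x y : ℝ, μ*(x^2+y^2) ≤ a0*x^2 + 2*g*x*y + a1*y^2 ∧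
        a0*x^2 + 2*g*x*y + a1*y^2 ≤ M*(x^2+y^2)) :
    e0^2 + 2*p^2 + e1^2 + (2*(M^2+μ^2)/(μ*M))*(e0*e1 - p^2)
      ≤ ((4*μ*M + 2*(M^2+μ^2))/(μ^3*M))*(a0*e0 + 2*g*p + a1*e1)^2 := by
  have hM : 0 < M := lt_of_lt_of_le hμ hμM
  have ha0 : μ ≤ a0 ∧ a0 ≤ M := by have := hQ 1 0; constructor <;> nlinarith [this.1, this.2]
  have ha1 : μ ≤ a1 ∧ a1 ≤ M := by have := hQ 0 1; constructor <;> nlinarith [this.1, this.2]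
  rcases eq_or_ne p 0 with hp | hp
  · subst hp
    have h := glue μ M a0 a1 e0 e1 hμ hμM ha0.1 ha0.2 ha1.1 ha1.2
    nlinarith [h]
  · set s : ℝ := Real.sqrt ((e0-e1)^2 + 4*p^2) with hsdef
    have hs0 : 0 ≤ s := Real.sqrt_nonneg _
    have hsD : s^2 = (e0-e1)^2 + 4*p^2 := Real.sq_sqrt (by positivity)
    set l1 : ℝ := (e0+e1+s)/2 with hl1
    set l2 : ℝ := (e0+e1-s)/2 with hl2
    have hsum : l1^2 + l2^2 = e0^2 + 2*p^2 + e1^2 := by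
      rw [hl1, hl2]; field_simp; linear_combination (2 : ℝ) * hsD
    have hprod : l1*l2 = e0*e1 - p^2 := by
      rw [hl1, hl2]; field_simp; linear_combination (-1 : ℝ) * hsD
    have hp2 : 0 < p^2 := by positivity
    have hN1 : 0 < p^2 + (l1-e0)^2 := by positivity
    have hN2 : 0 < p^2 + (l2-e0)^2 := by positivity
    set α : ℝ := (a0*p^2 + 2*g*p*(l1-e0) + a1*(l1-e0)^2)/(p^2+(l1-e0)^2) with hα
    set β : ℝ := (a0*p^2 + 2*g*p*(l2-e0) + a1*(l2-e0)^2)/(p^2+(l2-e0)^2) with hβ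
    have hα1 : μ ≤ α := by
      rw [hα, le_div_iff₀ hN1]
      have := (hQ p (l1-e0)).1; nlinarith [this]
    have hα2 : α ≤ M := by
      rw [hα, div_le_iff₀ hN1]
      have := (hQ p (l1-e0)).2; nlinarith [this]
    have hβ1 : μ ≤ β := by
      rw [hβ, le_div_iff₀ hN2]
      have := (hQ p (l2-e0)).1; nlinarith [this]
    have hβ2 : β ≤ M := by
      rw [hβ, div_le_iff₀ hN2]
      have := (hQ p (l2-e0)).2; nlinarith [this]
    have key : (a0*e0 + 2*g*p + a1*e1) * ((p^2+(l1-e0)^2) * (p^2+(l2-e0)^2))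
        = l1 * (a0*p^2 + 2*g*p*(l1-e0) + a1*(l1-e0)^2) * (p^2+(l2-e0)^2)
          + l2 * (a0*p^2 + 2*g*p*(l2-e0) + a1*(l2-e0)^2) * (p^2+(l1-e0)^2) := by
      rw [hl1, hl2]
      have expand : ((-1/8:ℝ)*p*g*s*s + (-1/2:ℝ)*p*p*p*g + (-1/4:ℝ)*e1*p*p*a1 + (1/4:ℝ)*e1*p*p*a0 + (1/8:ℝ)*e1*e1*p*g + (-1/16:ℝ)*e0*a1*s*s + (1/16:ℝ)*e0*a0*s*s + (1/4:ℝ)*e0*e1*p*g + (1/16:ℝ)*e0*e1*e1*a1 + (-1/16:ℝ)*e0*e1*e1*a0 + (-3/8:ℝ)*e0*e0*p*g + (-1/8:ℝ)*e0*e0*e1*a1 + (1/8:ℝ)*e0*e0*e1*a0 + (1/16:ℝ)*e0*e0*e0*a1 + (-1/16:ℝ)*e0*e0*e0*a0) = ((-1/8:ℝ)*p*g*s*s + (-1/2:ℝ)*p*p*p*g + (-1/4:ℝ)*e1*p*p*a1 + (1/4:ℝ)*e1*p*p*a0 + (1/8:ℝ)*e1*e1*p*g + (-1/16:ℝ)*e0*a1*s*s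 + (1/16:ℝ)*e0*a0*s*s + (1/4:ℝ)*e0*e1*p*g + (1/16:ℝ)*e0*e1*e1*a1 + (-1/16:ℝ)*e0*e1*e1*a0 + (-3/8:ℝ)*e0*e0*p*g + (-1/8:ℝ)*e0*e0*e1*a1 + (1/8:ℝ)*e0*e0*e1*a0 + (1/16:ℝ)*e0*e0*e0*a1 + (-1/16:ℝ)*e0*e0*e0*a0) := rfl
      linear_combination ((-1/8:ℝ)*p*g*s*s + (-1/2:ℝ)*p*p*p*g + (-1/4:ℝ)*e1*p*p*a1 + (1/4:ℝ)*e1*p*p*a0 + (1/8:ℝ)*e1*e1*p*g + (-1/16:ℝ)*e0*a1*s*s + (1/16:ℝ)*e0*a0*s*s + (1/4:ℝ)*e0*e1*p*g + (1/16:ℝ)*e0*e1*e1*a1 + (-1/16:ℝ)*e0*e1*e1*a0 + (-3/8:ℝ)*e0*e0*p*g + (-1/8:ℝ)*e0*e0*e1*a1 + (1/8:ℝ)*e0*e0*e1*a0 + (1/16:ℝ)*e0*e0*e0*a1 + (-1/16:ℝ)*e0*e0*e0*a0) * hsD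
    have hS : a0*e0 + 2*g*p + a1*e1 = α*l1 + β*l2 := by
      rw [hα, hβ]
      field_simp
      linear_combination key
    rw [hS, ← hsum, ← hprod]
    exact glue μ M α β l1 l2 hμ hμM hα1 hα2 hβ1 hβ2

theorem stmt6 (μ M : ℝ) (hμ : 0 < μ) (hμM : μ ≤ M) :
    ∃ C₀ C₁ : ℝ, 0 < C₀ ∧ 0 < C₁ ∧
      ∀ a e : Fin 2 → Fin 2 → ℝ,
        (∀ i j, a i j = a j i) →
        (∀ ξ : Fin 2 → ℝ,
          μ * (∑ i, ξ i ^ 2) ≤ ∑ i, ∑ j, ξ i * a i j * ξ j ∧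
            ∑ i, ∑ j, ξ i * a i j * ξ j ≤ M * (∑ i, ξ i ^ 2)) →
        (∀ i j, e i j = e j i) →
        (∑ i, ∑ j, e i j ^ 2) + C₁ * (e 0 0 * e 1 1 - e 0 1 ^ 2)
          ≤ C₀ * (∑ i, ∑ j, a i j * e i j) ^ 2 := by
  have hM : 0 < M := lt_of_lt_of_le hμ hμM
  refine ⟨(4*μ*M + 2*(M^2+μ^2))/(μ^3*M), 2*(M^2+μ^2)/(μ*M), by positivity, by positivity, ?_⟩
  intro a e ha hξ he
  have hQ : ∀ x y : ℝ, μ*(x^2+y^2) ≤ a 0 0*x^2 + 2*(a 0 1)*x*y + a 1 1*y^2 ∧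
      a 0 0*x^2 + 2*(a 0 1)*x*y + a 1 1*y^2 ≤ M*(x^2+y^2) := by
    intro x y
    have h := hξ ![x, y]
    simp [Fin.sum_univ_two] at h
    rw [ha 1 0] at h
    constructor <;> linarith [h.1, h.2]
  have h := main2 μ M (a 0 0) (a 1 1) (a 0 1) (e 0 0) (e 1 1) (e 0 1) hμ hμM hQ
  simp only [Fin.sum_univ_two]
  rw [he 1 0, ha 1 0]
  linarith [h]
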